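/- In ℓ², for each n ≥ 1 let A_n denote the ℂ-span of e_0 + e_n. Let (x_k) be a sequence in ℓ² converging in norm to x_∞ ∈ ℓ², and suppose that for every n there exists k ≥ n with x_k ∈ A_k. Then x_∞ = 0. -/

import Mathlib

open Filter Topology

noncomputable section

/-- The Hilbert space `ℓ²` of square-summable complex sequences. -/
abbrev ell2 : Type := lp (fun _ : ℕ => ℂ) 2

/-- The standard orthonormal basis vectors of `ℓ²`. -/
noncomputable def e (n : ℕ) : ell2 := lp.single 2 n (1 : ℂ)

/-- `A n` is the span of `e 0 + e n`. -/
noncomputable def A (n : ℕ) : Submodule ℂ ell2 := Submodule.span ℂ {e 0 + e n}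

/-
A vector of `A k` vanishes off the coordinates `0` and `k`, and its `0`-th coordinate is at most
its `k`-th one in modulus, so all its coordinates are bounded by the diagonal one. Along a
subsequence with `x k ∈ A k`, the diagonal coordinates `x k k` tend to `0` (they are dominated by
`‖x k - x'‖ + |x' k|`), hence so does every coordinate of `x k`; but coordinates of `x k`
converge to those of `x'`.
-/

open scoped ENNReal

theorem Memℓp.tendsto_norm_cofinite_zero {α : Type*} {E : α → Type*}
    [∀ i, NormedAddCommGroup (E i)] {p : ℝ≥0∞} (hp : 0 < p.toReal) {f : ∀ i, E i}
    (hf : Memℓp f p) : Tendsto (fun i => ‖f i‖) cofinite (𝓝 0) := by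
  have hpow : Tendsto (fun i => (‖f i‖ ^ p.toReal) ^ p.toReal⁻¹) cofinite (𝓝 0) := by
    simpa [Real.zero_rpow (inv_ne_zero hp.ne')] using
      (hf.summable hp).tendsto_cofinite_zero.rpow_const (p := p.toReal⁻¹) (Or.inr (by positivity))
  refine hpow.congr fun i => ?_
  rw [Real.rpow_rpow_inv (norm_nonneg _) hp.ne']

theorem lp.tendsto_norm_apply_self_of_tendsto {E : ℕ → Type*} [∀ i, NormedAddCommGroup (E i)]
    {p : ℝ≥0∞} [Fact (1 ≤ p)] (hp : p ≠ ∞) {F : ℕ → lp E p} {g : lp E p}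
    (hF : Tendsto F atTop (𝓝 g)) : Tendsto (fun k => ‖F k k‖) atTop (𝓝 0) := by
  have hp0 : p ≠ 0 := (zero_lt_one.trans_le Fact.out).ne'
  have hdist : Tendsto (fun k => ‖F k - g‖) atTop (𝓝 0) := tendsto_iff_norm_sub_tendsto_zero.1 hF
  have htail : Tendsto (fun k => ‖g k‖) atTop (𝓝 0) := by
    rw [← Nat.cofinite_eq_atTop]
    exact (lp.memℓp g).tendsto_norm_cofinite_zero (ENNReal.toReal_pos hp0 hp)
  refine squeeze_zero (fun _ => norm_nonneg _) (fun k => ?_) (by simpa using hdist.add htail)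
  calc ‖F k k‖ ≤ ‖F k k - g k‖ + ‖g k‖ := norm_le_norm_sub_add _ _
    _ ≤ ‖F k - g‖ + ‖g k‖ := by
      gcongr
      exact lp.norm_apply_le_norm hp0 (F k - g) k

theorem norm_apply_le_norm_apply_self_of_mem_A {k m : ℕ} {y : ell2} (hy : y ∈ A k)
    (hm : m ≠ k) : ‖y m‖ ≤ ‖y k‖ := by
  obtain ⟨c, rfl⟩ := Submodule.mem_span_singleton.1 hy
  have hcoord (j : ℕ) : (c • (e 0 + e k) : ell2) j =
      c * ((if j = 0 then 1 else 0) + if j = k then 1 else 0) := by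
    simp only [lp.coeFn_smul, lp.coeFn_add, Pi.add_apply, Pi.smul_apply, e, lp.single_apply,
      Pi.single_apply, smul_eq_mul]
  rw [hcoord, hcoord]
  by_cases hm0 : m = 0
  · subst hm0
    rw [if_pos rfl, if_neg hm, if_neg hm.symm, if_pos rfl, zero_add, add_zero]
  · rw [if_neg hm0, if_neg hm, add_zero, mul_zero, norm_zero]
    exact norm_nonneg _

theorem frequently_mem_A {x : ℕ → ell2}
    (hmem : ∀ n : ℕ, 1 ≤ n → ∃ k, n ≤ k ∧ x k ∈ A k) : ∃ᶠ k in atTop, x k ∈ A k :=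
  frequently_atTop.2 fun n =>
    let ⟨k, hk, hxk⟩ := hmem (max n 1) (le_max_right _ _)
    ⟨k, le_of_max_le_left hk, hxk⟩

/-- If `(x k)` converges in norm to `x'` in `ℓ²` and for every `n ≥ 1` there is
`k ≥ n` with `x k ∈ A k`, then `x' = 0`. -/
theorem lim_eq_zero_of_frequently_mem_span_e0_add_en
    (x : ℕ → ell2) (x' : ell2) (hconv : Tendsto x atTop (𝓝 x'))
    (hmem : ∀ n : ℕ, 1 ≤ n → ∃ k, n ≤ k ∧ x k ∈ A k) :
    x' = 0 := by
  obtain ⟨φ, hφ, hφA⟩ := extraction_of_frequently_atTop (frequently_mem_A hmem)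
  have hdiag : Tendsto (fun j => ‖x (φ j) (φ j)‖) atTop (𝓝 0) :=
    (lp.tendsto_norm_apply_self_of_tendsto ENNReal.ofNat_ne_top hconv).comp hφ.tendsto_atTop
  ext m
  have hcoord : Tendsto (fun j => x (φ j) m) atTop (𝓝 (x' m)) :=
    ((lp.lipschitzWith_one_eval 2 m).continuous.tendsto x').comp
      (hconv.comp hφ.tendsto_atTop)
  have hφm : ∀ᶠ j in atTop, m ≠ φ j :=
    (hφ.tendsto_atTop.eventually_ne_atTop m).mono fun _ => Ne.symm
  refine tendsto_nhds_unique hcoord (squeeze_zero_norm' ?_ hdiag)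
  exact hφm.mono fun j hj => norm_apply_le_norm_apply_self_of_mem_A (hφA j) hj
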